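/- Let α > 0 and x ∈ (0,1), and define the rate function I_{α,x}^{L}(z) := α( z·log(z/x) + (1−z)·log((1−z)/(1−x)) ) for z ∈ [0,1] (with 0·log 0 := 0) and I_{α,x}^{L}(z) := +∞ otherwise. Then for every open set G ⊂ ℝ, liminf_{n → ∞} (1/n)·log P(S_{α,x}^{(n)}/n ∈ G) ≥ −inf_{z ∈ G} I_{α,x}^{L}(z). -/

import Mathlib

/-!
It suffices to treat one point `z ∈ G ∩ [0, 1]`. Put `j = ⌈z n⌉`; for large `n` the probability
of `S/n ∈ G` is at least the single weight `μ({j})`. Bounding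
`log Γ(t + 1) = t log t - t + O(log (t + 2))` by Stirling's formula and applying it to the three
Gamma factors of `binom(α n, α j)` shows that the unnormalised weight has logarithm
`-α n KL(j/n ‖ x) + O(log n)`, uniformly in `j ≤ n`. As the relative entropy is nonnegative,
this also bounds the normaliser by `exp (O(log n))`, so `(1/n) log μ({j}) → -α KL(z ‖ x)` by
continuity.
-/

open MeasureTheory Filter

noncomputable def gbinom (w z : ℝ) : ℝ :=
  Real.Gamma (w + 1) / (Real.Gamma (z + 1) * Real.Gamma (w - z + 1))

noncomputable def fracZ (α x : ℝ) (n : ℕ) : ℝ :=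
  α * ∑ j ∈ Finset.range (n + 1),
    gbinom (α * n) (α * j) * x ^ (α * (j : ℝ)) * (1 - x) ^ (α * ((n : ℝ) - (j : ℝ)))

noncomputable def fracW (α x : ℝ) (n j : ℕ) : ℝ :=
  (α / fracZ α x n) * gbinom (α * n) (α * j) * x ^ (α * (j : ℝ))
    * (1 - x) ^ (α * ((n : ℝ) - (j : ℝ)))

/-- The fractional binomial distribution `μ_{α,x}^{(n)}` as a measure on `ℝ`. -/
noncomputable def fracMeasure (α x : ℝ) (n : ℕ) : Measure ℝ :=
  ∑ j ∈ Finset.range (n + 1), ENNReal.ofReal (fracW α x n j) • Measure.dirac (j : ℝ)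

/-- The large deviation rate function `I_{α,x}^{(L)}`, with values in `EReal`
(`0 · log 0 = 0` holds automatically since `Real.log 0 = 0`). -/
noncomputable def rateL (α x : ℝ) (z : ℝ) : EReal :=
  if z ∈ Set.Icc (0 : ℝ) 1 then
    ((α * (z * Real.log (z / x) + (1 - z) * Real.log ((1 - z) / (1 - x))) : ℝ) : EReal)
  else ⊤

open Real Topology

lemma log_factorial_le {n : ℕ} (hn : n ≠ 0) :
    log n.factorial ≤ n * log n - n + log n / 2 + 1 := by
  have hmono : log (Stirling.stirlingSeq n) ≤ log (Stirling.stirlingSeq 1) := by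
    obtain ⟨k, rfl⟩ := Nat.exists_eq_succ_of_ne_zero hn
    exact Stirling.log_stirlingSeq'_antitone (Nat.zero_le k)
  have hn' : (0 : ℝ) < n := by positivity
  rw [Stirling.log_stirlingSeq_formula, Stirling.stirlingSeq_one,
    log_div (exp_pos 1).ne' (by positivity), log_exp, log_sqrt zero_le_two,
    log_mul two_ne_zero hn'.ne', log_div hn'.ne' (exp_pos 1).ne', log_exp] at hmono
  linarith

lemma mul_log_sub_le {a b : ℝ} (ha : 0 ≤ a) (hab : a ≤ b) :
    b * log b - b - (a * log a - a) ≤ (b - a) * log b := by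
  rcases ha.eq_or_lt with rfl | ha
  · simpa using hab
  have hb := ha.trans_le hab
  have := log_le_sub_one_of_pos (div_pos hb ha)
  rw [log_div hb.ne' ha.ne'] at this
  have := mul_le_mul_of_nonneg_left this ha.le
  field_simp at this
  nlinarith

lemma le_mul_log_sub {a b : ℝ} (ha : 0 < a) (hab : a ≤ b) :
    (b - a) * log a ≤ b * log b - b - (a * log a - a) := by
  have hb := ha.trans_le hab
  have := log_le_sub_one_of_pos (div_pos ha hb)
  rw [log_div ha.ne' hb.ne'] at this
  have := mul_le_mul_of_nonneg_left this hb.le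
  field_simp at this
  nlinarith

lemma Gamma_add_two_mem_Icc_factorial {t : ℝ} (ht : 0 ≤ t) :
    Gamma (t + 2) ∈ Set.Icc ((⌊t⌋₊ + 1).factorial : ℝ) (⌊t⌋₊ + 2).factorial := by
  have hmono := Gamma_strictMonoOn_Ici.monotoneOn
  have hfl := Nat.floor_le ht
  have hlt := Nat.lt_floor_add_one t
  constructor <;>
  · rw [← Gamma_nat_eq_factorial]
    push_cast
    exact hmono (by simp; linarith) (by simp; linarith) (by linarith)

lemma log_Gamma_add_one_eq {t : ℝ} (ht : 0 ≤ t) :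
    log (Gamma (t + 1)) = log (Gamma (t + 2)) - log (t + 1) := by
  rw [show t + 2 = (t + 1) + 1 by ring, Gamma_add_one (s := t + 1) (by linarith),
    log_mul (by linarith) (Gamma_pos_of_pos (by linarith)).ne']
  ring

lemma le_log_Gamma_add_one {t : ℝ} (ht : 0 ≤ t) :
    t * log t - t - 2 * log (t + 1) - 1 ≤ log (Gamma (t + 1)) := by
  set m := ⌊t⌋₊
  have hfl : (m : ℝ) ≤ t := Nat.floor_le ht
  have hlt : t < m + 1 := Nat.lt_floor_add_one t
  have hfact : (m + 1 : ℝ) * log (m + 1) - (m + 1) ≤ log (Gamma (t + 2)) := by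
    have := Stirling.le_log_factorial_stirling (n := m + 1) (by omega)
    have := log_le_log (by positivity) (Gamma_add_two_mem_Icc_factorial ht).1
    have : 0 ≤ log (m + 1 : ℝ) := log_nonneg (by linarith)
    have : 0 ≤ log (2 * π) := log_nonneg (by linarith [pi_gt_three])
    push_cast at *
    linarith
  have hslope := mul_log_sub_le (a := m + 1) (b := t + 1) (by positivity) (by linarith)
  have hlog : 0 ≤ log (t + 1) := log_nonneg (by linarith)
  have hshift : t * log t ≤ (t + 1) * log (t + 1) := by
    rcases ht.eq_or_lt with rfl | ht'
    · simp
    nlinarith [log_le_log ht' (show t ≤ t + 1 by linarith)]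
  rw [log_Gamma_add_one_eq ht]
  nlinarith

lemma log_Gamma_add_one_le {t : ℝ} (ht : 0 ≤ t) :
    log (Gamma (t + 1)) ≤ t * log t - t + 5 / 2 * log (t + 2) + 1 := by
  set m := ⌊t⌋₊
  have hfl : (m : ℝ) ≤ t := Nat.floor_le ht
  have hfact :
      log (Gamma (t + 2)) ≤ (m + 2 : ℝ) * log (m + 2) - (m + 2) + log (m + 2) / 2 + 1 := by
    have := log_factorial_le (n := m + 2) (by omega)
    have := log_le_log (Gamma_pos_of_pos (by linarith))
      (Gamma_add_two_mem_Icc_factorial ht).2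
    push_cast at *
    linarith
  have hmono := le_mul_log_sub (a := m + 2) (b := t + 2) (by positivity) (by linarith)
  have hm2 : 0 ≤ log (m + 2 : ℝ) := log_nonneg (by linarith)
  have hm2t : log (m + 2 : ℝ) ≤ log (t + 2) := log_le_log (by positivity) (by linarith)
  have hstep := mul_log_sub_le (a := t) (b := t + 2) ht (by linarith)
  have hlog : 0 ≤ log (t + 1) := log_nonneg (by linarith)
  rw [log_Gamma_add_one_eq ht]
  nlinarith

lemma abs_log_Gamma_add_one_sub_le {t : ℝ} (ht : 0 ≤ t) :
    |log (Gamma (t + 1)) - (t * log t - t)| ≤ 3 * log (t + 2) + 1 := by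
  have := le_log_Gamma_add_one ht
  have := log_Gamma_add_one_le ht
  have : log (t + 1) ≤ log (t + 2) := log_le_log (by linarith) (by linarith)
  have : 0 ≤ log (t + 2) := log_nonneg (by linarith)
  rw [abs_le]
  constructor <;> linarith

/-- `rateL α x z = α * bernoulliKL x z` for `z ∈ [0, 1]`, definitionally. -/
noncomputable def bernoulliKL (x r : ℝ) : ℝ :=
  r * log (r / x) + (1 - r) * log ((1 - r) / (1 - x))

lemma mul_log_div (a : ℝ) {b : ℝ} (hb : b ≠ 0) : a * log (a / b) = a * log a - a * log b := by
  rcases eq_or_ne a 0 with rfl | ha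
  · simp
  rw [log_div ha hb]
  ring

section bernoulliKL
open InformationTheory
variable {x : ℝ} (hx₀ : x ≠ 0) (hx₁ : x ≠ 1)
include hx₀ hx₁

lemma bernoulliKL_eq_klFun (r : ℝ) :
    bernoulliKL x r = x * klFun (r / x) + (1 - x) * klFun ((1 - r) / (1 - x)) := by
  have hx₁' : 1 - x ≠ 0 := sub_ne_zero.mpr hx₁.symm
  simp only [bernoulliKL, klFun_apply]
  field_simp
  ring

lemma continuous_bernoulliKL : Continuous (bernoulliKL x) := by
  simp_rw [funext (bernoulliKL_eq_klFun hx₀ hx₁)]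
  fun_prop

lemma neg_mul_bernoulliKL_eq (N r : ℝ) :
    -N * bernoulliKL x r = N * log N - N * r * log (N * r) - N * (1 - r) * log (N * (1 - r))
      + N * r * log x + N * (1 - r) * log (1 - x) := by
  have hx₁' : 1 - x ≠ 0 := sub_ne_zero.mpr hx₁.symm
  have hprod (s : ℝ) : N * s * log (N * s) = s * (N * log N) + N * (s * log s) := by
    have := negMulLog_mul N s
    simp only [negMulLog] at this
    linarith
  rw [hprod, hprod, bernoulliKL, mul_log_div r hx₀, mul_log_div (1 - r) hx₁']
  ring

end bernoulliKL

lemma bernoulliKL_nonneg {x r : ℝ} (hx : x ∈ Set.Ioo 0 1) (hr : r ∈ Set.Icc 0 1) :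
    0 ≤ bernoulliKL x r := by
  rw [bernoulliKL_eq_klFun hx.1.ne' hx.2.ne]
  have h1 : 0 < 1 - x := sub_pos.mpr hx.2
  have := InformationTheory.klFun_nonneg (div_nonneg hr.1 hx.1.le)
  have := InformationTheory.klFun_nonneg (div_nonneg (sub_nonneg.mpr hr.2) h1.le)
  have := hx.1
  positivity

lemma gbinom_pos {w z : ℝ} (hz : 0 ≤ z) (hzw : z ≤ w) : 0 < gbinom w z := by
  unfold gbinom
  have := Gamma_pos_of_pos (show 0 < w + 1 by linarith)
  have := Gamma_pos_of_pos (show 0 < z + 1 by linarith)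
  have := Gamma_pos_of_pos (show 0 < w - z + 1 by linarith)
  positivity

lemma log_gbinom {w z : ℝ} (hz : 0 ≤ z) (hzw : z ≤ w) :
    log (gbinom w z) = log (Gamma (w + 1)) - log (Gamma (z + 1)) - log (Gamma (w - z + 1)) := by
  have h₁ := Gamma_pos_of_pos (show 0 < w + 1 by linarith)
  have h₂ := Gamma_pos_of_pos (show 0 < z + 1 by linarith)
  have h₃ := Gamma_pos_of_pos (show 0 < w - z + 1 by linarith)
  rw [gbinom, log_div h₁.ne' (by positivity), log_mul h₂.ne' h₃.ne']
  ring

noncomputable def fracTerm (α x : ℝ) (n j : ℕ) : ℝ :=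
  gbinom (α * n) (α * j) * x ^ (α * (j : ℝ)) * (1 - x) ^ (α * ((n : ℝ) - (j : ℝ)))

lemma fracW_eq_div_mul (α x : ℝ) (n j : ℕ) :
    fracW α x n j = α / fracZ α x n * fracTerm α x n j := by
  unfold fracW fracTerm
  ring

section fracTerm
variable {α x : ℝ} (hα : 0 < α) (hx : x ∈ Set.Ioo 0 1)
include hα hx

lemma fracTerm_pos {n j : ℕ} (hj : j ≤ n) : 0 < fracTerm α x n j := by
  have hjn : (α * j : ℝ) ≤ α * n := by gcongr
  have hj0 : (0 : ℝ) ≤ α * j := by positivity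
  have := gbinom_pos (w := α * n) (z := α * j) hj0 hjn
  have := rpow_pos_of_pos hx.1 (α * j)
  have := rpow_pos_of_pos (sub_pos.mpr hx.2) (α * ((n : ℝ) - j))
  unfold fracTerm
  positivity

lemma fracZ_pos (n : ℕ) : 0 < fracZ α x n :=
  mul_pos hα (Finset.sum_pos (fun _ hj => fracTerm_pos hα hx (Nat.lt_succ_iff.mp
    (Finset.mem_range.mp hj))) Finset.nonempty_range_add_one)

lemma fracW_pos {n j : ℕ} (hj : j ≤ n) : 0 < fracW α x n j := by
  rw [fracW_eq_div_mul]
  have := fracZ_pos hα hx n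
  have := fracTerm_pos hα hx hj
  positivity

lemma abs_log_fracTerm_add_le {n j : ℕ} (hj : j ≤ n) (hn : n ≠ 0) :
    |log (fracTerm α x n j) + α * n * bernoulliKL x (j / n)|
      ≤ 3 * (3 * log (α * n + 2) + 1) := by
  have hjn : (α * j : ℝ) ≤ α * n := by gcongr
  have hj0 : (0 : ℝ) ≤ α * j := by positivity
  have hlog (t : ℝ) (ht₀ : 0 ≤ t) (ht : t ≤ α * n) :
      |log (Gamma (t + 1)) - (t * log t - t)| ≤ 3 * log (α * n + 2) + 1 := by
    have := log_le_log (by linarith) (show t + 2 ≤ α * n + 2 by linarith)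
    linarith [abs_log_Gamma_add_one_sub_le ht₀]
  have hN := hlog (α * n) (by linarith) le_rfl
  have hJ := hlog (α * j) hj0 hjn
  have hK := hlog (α * n - α * j) (by linarith) (by linarith)
  have hentropy := neg_mul_bernoulliKL_eq hx.1.ne' hx.2.ne (α * n) (j / n)
  have hn' : (n : ℝ) ≠ 0 := by exact_mod_cast hn
  have hr₁ : α * n * (j / n : ℝ) = α * j := by field_simp
  have hr₂ : α * n * (1 - j / n : ℝ) = α * n - α * j := by field_simp
  rw [hr₁, hr₂] at hentropy
  have hT : log (fracTerm α x n j) = log (Gamma (α * n + 1)) - log (Gamma (α * j + 1))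
      - log (Gamma (α * n - α * j + 1)) + α * j * log x + (α * n - α * j) * log (1 - x) := by
    have hg := gbinom_pos hj0 hjn
    have hp := rpow_pos_of_pos hx.1 (α * j)
    have hq := rpow_pos_of_pos (sub_pos.mpr hx.2) (α * ((n : ℝ) - j))
    rw [fracTerm, log_mul (by positivity) hq.ne', log_mul hg.ne' hp.ne',
      log_gbinom hj0 hjn, log_rpow hx.1, log_rpow (sub_pos.mpr hx.2)]
    ring
  rw [abs_le] at *
  constructor <;> linarith

end fracTerm

section fracW
variable {α x : ℝ} (hα : 0 < α) (hx : x ∈ Set.Ioo 0 1)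
include hα hx

lemma fracZ_le {n : ℕ} (hn : n ≠ 0) :
    fracZ α x n ≤ α * (n + 1) * exp (3 * (3 * log (α * n + 2) + 1)) := by
  have hterm : ∀ j ∈ Finset.range (n + 1),
      fracTerm α x n j ≤ exp (3 * (3 * log (α * n + 2) + 1)) := by
    intro j hj
    have hj : j ≤ n := Nat.lt_succ_iff.mp (Finset.mem_range.mp hj)
    have hr : (j / n : ℝ) ∈ Set.Icc 0 1 :=
      ⟨by positivity, div_le_one_of_le₀ (by exact_mod_cast hj) (Nat.cast_nonneg n)⟩
    have hKL := mul_nonneg (by positivity : (0 : ℝ) ≤ α * n) (bernoulliKL_nonneg hx hr)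
    rw [← exp_log (fracTerm_pos hα hx hj), exp_le_exp]
    linarith [(abs_le.mp (abs_log_fracTerm_add_le hα hx hj hn)).2]
  calc fracZ α x n = α * ∑ j ∈ Finset.range (n + 1), fracTerm α x n j := rfl
    _ ≤ α * ∑ j ∈ Finset.range (n + 1), exp (3 * (3 * log (α * n + 2) + 1)) := by
      gcongr with j hj
      exact hterm j hj
    _ = α * (n + 1) * exp (3 * (3 * log (α * n + 2) + 1)) := by
      rw [Finset.sum_const, Finset.card_range, nsmul_eq_mul]
      push_cast
      ring

lemma log_fracW_ge {n j : ℕ} (hj : j ≤ n) (hn : n ≠ 0) :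
    -(α * n * bernoulliKL x (j / n)) - (6 * (3 * log (α * n + 2) + 1) + log (n + 1))
      ≤ log (fracW α x n j) := by
  have hZ := fracZ_pos hα hx n
  have hT := fracTerm_pos hα hx hj
  have hlogZ : log (fracZ α x n) ≤ log α + log (n + 1) + 3 * (3 * log (α * n + 2) + 1) := by
    have := log_le_log hZ (fracZ_le hα hx hn)
    rwa [log_mul (by positivity) (exp_pos _).ne', log_mul hα.ne' (by positivity), log_exp]
      at this
  rw [fracW_eq_div_mul, log_mul (by positivity) hT.ne', log_div hα.ne' hZ.ne']
  linarith [(abs_le.mp (abs_log_fracTerm_add_le hα hx hj hn)).1]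

end fracW

lemma isLittleO_log_affine {a : ℝ} (ha : 0 < a) (b : ℝ) :
    (fun t => log (a * t + b)) =o[atTop] id := by
  have htend : Tendsto (fun t => a * t + b) atTop atTop :=
    tendsto_atTop_add_const_right _ b (tendsto_id.const_mul_atTop ha)
  refine (isLittleO_log_id_atTop.comp_tendsto htend).trans_isBigO ?_
  exact ((Asymptotics.isBigO_refl id atTop).const_mul_left a).add
    (Asymptotics.isLittleO_const_id_atTop b).isBigO

lemma tendsto_log_error_div_atTop {α : ℝ} (hα : 0 < α) :
    Tendsto (fun n : ℕ => (6 * (3 * log (α * n + 2) + 1) + log (n + 1)) / n) atTop (𝓝 0) := by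
  have h : (fun t => 6 * (3 * log (α * t + 2) + 1) + log (t + 1)) =o[atTop] id :=
    ((((isLittleO_log_affine hα 2).const_mul_left 3).add
      (Asymptotics.isLittleO_const_id_atTop 1)).const_mul_left 6).add
      (by simpa using isLittleO_log_affine one_pos 1)
  exact (h.comp_tendsto tendsto_natCast_atTop_atTop).tendsto_div_nhds_zero

lemma ofReal_fracW_le_fracMeasure (α x : ℝ) {n j : ℕ} (hj : j ≤ n) {A : Set ℝ}
    (hA : (j : ℝ) ∈ A) :
    ENNReal.ofReal (fracW α x n j) ≤ fracMeasure α x n A := by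
  rw [fracMeasure, Measure.finsetSum_apply]
  refine le_trans ?_ (Finset.single_le_sum (fun _ _ => zero_le)
    (Finset.mem_range.mpr (Nat.lt_succ_of_le hj)))
  simp [Measure.dirac_apply_of_mem hA]

lemma le_liminf_log_fracMeasure {α x : ℝ} (hα : 0 < α) (hx : x ∈ Set.Ioo 0 1) {G : Set ℝ}
    (hG : IsOpen G) {z : ℝ} (hz : z ∈ Set.Icc 0 1) (hzG : z ∈ G) :
    ((-(α * bernoulliKL x z) : ℝ) : EReal) ≤
      liminf (fun n : ℕ => ((((n : ℝ)⁻¹ : ℝ) : EReal) *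
        ENNReal.log (fracMeasure α x n {y : ℝ | y / (n : ℝ) ∈ G}))) atTop := by
  set j : ℕ → ℕ := fun n => ⌈z * n⌉₊
  have hj (n : ℕ) : j n ≤ n := Nat.ceil_le.mpr (mul_le_of_le_one_left (Nat.cast_nonneg n) hz.2)
  have hratio : Tendsto (fun n : ℕ => (j n : ℝ) / n) atTop (𝓝 z) :=
    (tendsto_nat_ceil_mul_div_atTop hz.1).comp tendsto_natCast_atTop_atTop
  set b : ℕ → ℝ := fun n => -(α * bernoulliKL x (j n / n))
    - (6 * (3 * log (α * n + 2) + 1) + log (n + 1)) / n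
  have hb : Tendsto b atTop (𝓝 (-(α * bernoulliKL x z))) := by
    simpa using ((((continuous_bernoulliKL hx.1.ne' hx.2.ne).tendsto z).comp hratio).const_mul
      α).neg.sub (tendsto_log_error_div_atTop hα)
  have hle : ∀ᶠ n in atTop, (b n : EReal) ≤ (((n : ℝ)⁻¹ : ℝ) : EReal) *
      ENNReal.log (fracMeasure α x n {y : ℝ | y / (n : ℝ) ∈ G}) := by
    filter_upwards [hratio.eventually (hG.mem_nhds hzG), eventually_ne_atTop 0] with n hmem hn
    have hmeas := ENNReal.log_monotone (ofReal_fracW_le_fracMeasure α x (hj n)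
      (A := {y : ℝ | y / (n : ℝ) ∈ G}) hmem)
    rw [ENNReal.log_ofReal_of_pos (fracW_pos hα hx (hj n))] at hmeas
    have hn' : (n : ℝ) ≠ 0 := by exact_mod_cast hn
    have hinv : (0 : ℝ) ≤ (n : ℝ)⁻¹ := inv_nonneg.mpr (Nat.cast_nonneg n)
    calc (b n : EReal) = (((n : ℝ)⁻¹ * (-(α * n * bernoulliKL x (j n / n))
          - (6 * (3 * log (α * n + 2) + 1) + log (n + 1))) : ℝ) : EReal) := by
          congr 1
          simp only [b]
          field_simp
      _ ≤ (((n : ℝ)⁻¹ : ℝ) : EReal) * (log (fracW α x n (j n)) : EReal) := by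
          rw [← EReal.coe_mul]
          exact_mod_cast mul_le_mul_of_nonneg_left (log_fracW_ge hα hx (hj n) hn) hinv
      _ ≤ _ := mul_le_mul_of_nonneg_left hmeas (by exact_mod_cast hinv)
  calc ((-(α * bernoulliKL x z) : ℝ) : EReal) = liminf (fun n => (b n : EReal)) atTop :=
        ((continuous_coe_real_ereal.tendsto _).comp hb).liminf_eq.symm
    _ ≤ _ := liminf_le_liminf hle

/-- LDP lower bound for `S_{α,x}^{(n)}/n` with speed `n` and rate function `I_{α,x}^{(L)}`:
for any open set `G`, `liminf (1/n) log P(S/n ∈ G) ≥ −inf_G I`. -/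
theorem fracBinom_ldp_lower (α x : ℝ) (hα : 0 < α) (hx : x ∈ Set.Ioo (0 : ℝ) 1)
    (G : Set ℝ) (hG : IsOpen G) :
    -(⨅ z ∈ G, rateL α x z) ≤
      Filter.liminf (fun n : ℕ =>
        ((((n : ℝ)⁻¹ : ℝ) : EReal) *
          ENNReal.log (fracMeasure α x n {y : ℝ | y / (n : ℝ) ∈ G})))
      Filter.atTop := by
  refine EReal.neg_le.mpr (le_iInf₂ fun z hzG => ?_)
  by_cases hz : z ∈ Set.Icc (0 : ℝ) 1
  · rw [rateL, if_pos hz, EReal.neg_le, ← EReal.coe_neg]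
    exact le_liminf_log_fracMeasure hα hx hG hz hzG
  · rw [rateL, if_neg hz]
    exact le_top
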